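/- For positive semidefinite matrices $A, B, C \in \mathbb{C}^{d \times d}$ with $\mathrm{Tr}(C) = 1$, the fidelity difference satisfies $\left| \|\sqrt{A}\sqrt{C}\|_1 - \|\sqrt{B}\sqrt{C}\|_1 \right| \le \sqrt{\mathrm{Tr}((\sqrt{A} - \sqrt{B})^2)}$. -/

import Mathlib

open Matrix ComplexOrder

/-- The positive semidefinite square root of a positive semidefinite matrix -/
noncomputable def Matrix.PosSemidef.sqrt {n : Type*} [Fintype n] [DecidableEq n] {𝕜 : Type*}
    [RCLike 𝕜] {A : Matrix n n 𝕜} (hA : A.PosSemidef) : Matrix n n 𝕜 :=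
  hA.1.eigenvectorUnitary.1 * diagonal ((↑) ∘ (√·) ∘ hA.1.eigenvalues) *
  (star hA.1.eigenvectorUnitary : Matrix n n 𝕜)

/-- The trace norm `‖X‖₁ = Tr √(Xᴴ X)` of a complex matrix (a real number, since the trace
of a positive semidefinite matrix is real). -/
noncomputable def traceNorm {d : ℕ} (X : Matrix (Fin d) (Fin d) ℂ) : ℝ :=
  ((Matrix.posSemidef_conjTranspose_mul_self X).sqrt.trace).re

/-!
The trace norm is the support function of the contractions: `Re Tr(Vᴴ Y) ≤ ‖Y‖₁` whenever
`Vᴴ V ≤ 1`, with equality when `V` is the polar factor of `Y`. This gives the reverse triangle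
inequality `|‖X‖₁ - ‖Y‖₁| ≤ ‖X - Y‖₁` and, through Cauchy–Schwarz for the Hilbert–Schmidt inner
product, the Hölder bound `‖M S‖₁ ≤ ‖M‖₂ ‖Sᴴ‖₂`. For `X - Y = (√A - √B) √C` the two factors are
`√Tr((√A - √B)²)` and `√Tr C = 1`.
-/

open scoped MatrixOrder

namespace Matrix

variable {𝕜 n : Type*} [RCLike 𝕜] [Fintype n]

noncomputable def hilbertSchmidtNorm (X : Matrix n n 𝕜) : ℝ := √(RCLike.re (Xᴴ * X).trace)

lemma hilbertSchmidtNorm_nonneg (X : Matrix n n 𝕜) : 0 ≤ hilbertSchmidtNorm X :=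
  Real.sqrt_nonneg _

lemma mul_self_hilbertSchmidtNorm (X : Matrix n n 𝕜) :
    hilbertSchmidtNorm X * hilbertSchmidtNorm X = RCLike.re (Xᴴ * X).trace :=
  Real.mul_self_sqrt (RCLike.nonneg_iff.mp (posSemidef_conjTranspose_mul_self X).trace_nonneg).1

lemma re_trace_le_re_trace {A B : Matrix n n 𝕜} (h : A ≤ B) :
    RCLike.re A.trace ≤ RCLike.re B.trace := by
  have := (RCLike.nonneg_iff.mp (le_iff.mp h).trace_nonneg).1
  rwa [trace_sub, map_sub, sub_nonneg] at this

variable [DecidableEq n]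

lemma re_trace_conjTranspose_mul_le (G H : Matrix n n 𝕜) :
    RCLike.re (Gᴴ * H).trace ≤ hilbertSchmidtNorm G * hilbertSchmidtNorm H := by
  -- the inner product induced by `1`, `⟪x, y⟫ = Tr(y * 1 * xᴴ)`
  let := toMatrixSeminormedAddCommGroup (1 : Matrix n n 𝕜) PosSemidef.one
  let := toMatrixInnerProductSpace (1 : Matrix n n 𝕜) PosSemidef.one
  have hnorm (X : Matrix n n 𝕜) : ‖Xᴴ‖ = hilbertSchmidtNorm X := by
    rw [hilbertSchmidtNorm, ← Real.sqrt_sq (norm_nonneg _), norm_sq_eq_re_inner (𝕜 := 𝕜)]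
    congr 2
    change (Xᴴ * 1 * Xᴴᴴ).trace = _
    rw [mul_one, conjTranspose_conjTranspose, trace_mul_comm]
  have hinner : inner 𝕜 Hᴴ Gᴴ = (Gᴴ * H).trace := by
    change (Gᴴ * 1 * Hᴴᴴ).trace = _
    rw [mul_one, conjTranspose_conjTranspose]
  rw [← hinner, ← hnorm, ← hnorm, mul_comm]
  exact re_inner_le_norm _ _

lemma hilbertSchmidtNorm_mul_le {V : Matrix n n 𝕜} (hV : Vᴴ * V ≤ 1) (R : Matrix n n 𝕜) :
    hilbertSchmidtNorm (V * R) ≤ hilbertSchmidtNorm R := by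
  have h : (V * R)ᴴ * (V * R) ≤ Rᴴ * R := by
    simpa [star_eq_conjTranspose, conjTranspose_mul, mul_assoc] using
      star_left_conjugate_le_conjugate hV R
  exact Real.sqrt_le_sqrt (re_trace_le_re_trace h)

lemma PosSemidef.sqrt_eq_cfcSqrt {A : Matrix n n 𝕜} (hA : A.PosSemidef) :
    hA.sqrt = CFC.sqrt A := by
  rw [CFC.sqrt_eq_real_sqrt A hA.nonneg, cfcₙ_eq_cfc, hA.1.cfc_eq]
  rfl

lemma PosSemidef.conjTranspose_sqrt {A : Matrix n n 𝕜} (hA : A.PosSemidef) :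
    hA.sqrtᴴ = hA.sqrt := by
  rw [hA.sqrt_eq_cfcSqrt]
  exact (CFC.sqrt_nonneg A).isSelfAdjoint.star_eq

lemma PosSemidef.sqrt_mul_self {A : Matrix n n 𝕜} (hA : A.PosSemidef) :
    hA.sqrt * hA.sqrt = A := by
  rw [hA.sqrt_eq_cfcSqrt]
  exact CFC.sqrt_mul_sqrt_self A hA.nonneg

lemma cfc_mul_cfc (f g : ℝ → ℝ) (A : Matrix n n 𝕜) :
    cfc f A * cfc g A = cfc (fun x ↦ f x * g x) A :=
  (cfc_mul f g A (A.finite_real_spectrum.continuousOn f)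
    (A.finite_real_spectrum.continuousOn g)).symm

lemma conjTranspose_cfc (f : ℝ → ℝ) (A : Matrix n n 𝕜) : (cfc f A)ᴴ = cfc f A :=
  (cfc_predicate f A).star_eq

/-- `X (Xᴴ X)^(-1/2)`, where `0⁻¹ = 0` makes `(√·)⁻¹` act as the pseudo-inverse of `|X|`: the
result is the partial isometry `V` of the polar decomposition `X = V |X|`. -/
noncomputable def polarFactor (X : Matrix n n 𝕜) : Matrix n n 𝕜 :=
  X * cfc (fun x : ℝ ↦ (√x)⁻¹) (Xᴴ * X)

variable (X : Matrix n n 𝕜)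

lemma polarFactor_conjTranspose_mul_self_le_one : (polarFactor X)ᴴ * polarFactor X ≤ 1 := by
  have hT : 0 ≤ Xᴴ * X := (posSemidef_conjTranspose_mul_self X).nonneg
  rw [polarFactor, conjTranspose_mul, conjTranspose_cfc, mul_assoc, ← mul_assoc Xᴴ]
  nth_rw 2 [← cfc_id' ℝ (Xᴴ * X)]
  rw [cfc_mul_cfc, cfc_mul_cfc]
  refine cfc_le_one _ _ fun x _ ↦ ?_
  rcases le_or_gt x 0 with hx | hx
  · simp [Real.sqrt_eq_zero'.mpr hx]
  · have := Real.mul_self_sqrt hx.le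
    field_simp
    linarith

lemma polarFactor_conjTranspose_mul : (polarFactor X)ᴴ * X = CFC.sqrt (Xᴴ * X) := by
  have hT : 0 ≤ Xᴴ * X := (posSemidef_conjTranspose_mul_self X).nonneg
  rw [polarFactor, conjTranspose_mul, conjTranspose_cfc, mul_assoc,
    CFC.sqrt_eq_real_sqrt _ hT, cfcₙ_eq_cfc]
  nth_rw 2 [← cfc_id' ℝ (Xᴴ * X)]
  rw [cfc_mul_cfc]
  refine cfc_congr fun x hx ↦ ?_
  rcases (spectrum_nonneg_of_nonneg hT hx).eq_or_lt with rfl | hx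
  · simp
  · nth_rw 2 [← Real.mul_self_sqrt hx.le]
    field_simp

lemma polarFactor_mul_sqrt : polarFactor X * CFC.sqrt (Xᴴ * X) = X := by
  have hT : 0 ≤ Xᴴ * X := (posSemidef_conjTranspose_mul_self X).nonneg
  set P := cfc (fun x : ℝ ↦ (√x)⁻¹ * √x) (Xᴴ * X) with hP
  have hTP : Xᴴ * X * P = Xᴴ * X := by
    nth_rw 1 [← cfc_id' ℝ (Xᴴ * X)]
    rw [hP, cfc_mul_cfc]
    nth_rw 2 [← cfc_id' ℝ (Xᴴ * X)]
    refine cfc_congr fun x hx ↦ ?_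
    rcases (spectrum_nonneg_of_nonneg hT hx).eq_or_lt with rfl | hx
    · simp
    · simp [(Real.sqrt_pos.mpr hx).ne']
  have hXP : X - X * P = 0 := by
    rw [← conjTranspose_mul_self_eq_zero, ← mul_one X, mul_assoc, one_mul, ← mul_sub,
      conjTranspose_mul, conjTranspose_sub, conjTranspose_one, hP, conjTranspose_cfc, ← hP,
      mul_assoc, ← mul_assoc Xᴴ, mul_sub, mul_one, hTP, sub_self, mul_zero]
  rw [polarFactor, mul_assoc, CFC.sqrt_eq_real_sqrt _ hT, cfcₙ_eq_cfc, cfc_mul_cfc, ← hP]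
  exact (sub_eq_zero.mp hXP).symm

end Matrix

section TraceNorm

variable {d : ℕ}

lemma traceNorm_eq_re_trace_sqrt (X : Matrix (Fin d) (Fin d) ℂ) :
    traceNorm X = (CFC.sqrt (Xᴴ * X)).trace.re := by
  rw [traceNorm, PosSemidef.sqrt_eq_cfcSqrt]

lemma traceNorm_eq_re_trace_polarFactor (X : Matrix (Fin d) (Fin d) ℂ) :
    traceNorm X = ((polarFactor X)ᴴ * X).trace.re := by
  rw [traceNorm_eq_re_trace_sqrt, polarFactor_conjTranspose_mul]

lemma traceNorm_neg (X : Matrix (Fin d) (Fin d) ℂ) : traceNorm (-X) = traceNorm X := by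
  simp only [traceNorm_eq_re_trace_sqrt, conjTranspose_neg, neg_mul_neg]

/-- With `Y = W R R` for the polar factor `W` and `R = |Y|^(1/2)`, the trace becomes the
Hilbert–Schmidt pairing of `V R` and `W R`, both of norm at most `‖R‖₂ = ‖Y‖₁^(1/2)`. -/
lemma re_trace_conjTranspose_mul_le_traceNorm {V : Matrix (Fin d) (Fin d) ℂ} (hV : Vᴴ * V ≤ 1)
    (Y : Matrix (Fin d) (Fin d) ℂ) : (Vᴴ * Y).trace.re ≤ traceNorm Y := by
  set N := CFC.sqrt (Yᴴ * Y)
  set R := CFC.sqrt N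
  set W := polarFactor Y
  have hRH : Rᴴ = R := (CFC.sqrt_nonneg N).isSelfAdjoint.star_eq
  have hRR : R * R = N := CFC.sqrt_mul_sqrt_self N
  have hWN : W * N = Y := polarFactor_mul_sqrt Y
  have hY : (Vᴴ * Y).trace = ((V * R)ᴴ * (W * R)).trace := by
    rw [← hWN, ← hRR, conjTranspose_mul, hRH, ← mul_assoc W, ← mul_assoc,
      trace_mul_comm, ← mul_assoc]
  calc (Vᴴ * Y).trace.re = RCLike.re ((V * R)ᴴ * (W * R)).trace := by rw [hY]; rfl
    _ ≤ hilbertSchmidtNorm (V * R) * hilbertSchmidtNorm (W * R) :=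
      re_trace_conjTranspose_mul_le _ _
    _ ≤ hilbertSchmidtNorm R * hilbertSchmidtNorm R :=
      mul_le_mul (hilbertSchmidtNorm_mul_le hV R)
        (hilbertSchmidtNorm_mul_le (polarFactor_conjTranspose_mul_self_le_one Y) R)
        (hilbertSchmidtNorm_nonneg _) (hilbertSchmidtNorm_nonneg _)
    _ = traceNorm Y := by
      rw [mul_self_hilbertSchmidtNorm, hRH, hRR, traceNorm_eq_re_trace_sqrt]
      rfl

lemma traceNorm_add_le (X Y : Matrix (Fin d) (Fin d) ℂ) :
    traceNorm (X + Y) ≤ traceNorm X + traceNorm Y := by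
  have hV := polarFactor_conjTranspose_mul_self_le_one (X + Y)
  rw [traceNorm_eq_re_trace_polarFactor, mul_add, trace_add, Complex.add_re]
  exact add_le_add (re_trace_conjTranspose_mul_le_traceNorm hV X)
    (re_trace_conjTranspose_mul_le_traceNorm hV Y)

lemma abs_traceNorm_sub_traceNorm_le (X Y : Matrix (Fin d) (Fin d) ℂ) :
    |traceNorm X - traceNorm Y| ≤ traceNorm (X - Y) := by
  have hX := traceNorm_add_le Y (X - Y)
  have hY := traceNorm_add_le X (Y - X)
  rw [add_sub_cancel] at hX
  rw [add_sub_cancel, ← neg_sub, traceNorm_neg] at hY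
  exact abs_sub_le_iff.mpr ⟨by linarith, by linarith⟩

lemma traceNorm_mul_le (M S : Matrix (Fin d) (Fin d) ℂ) :
    traceNorm (M * S) ≤ hilbertSchmidtNorm M * hilbertSchmidtNorm Sᴴ := by
  set V := polarFactor (M * S)
  have hV : Vᴴ * V ≤ 1 := polarFactor_conjTranspose_mul_self_le_one (M * S)
  calc traceNorm (M * S) = RCLike.re ((V * Sᴴ)ᴴ * M).trace := by
        rw [traceNorm_eq_re_trace_polarFactor, ← mul_assoc, trace_mul_comm, ← mul_assoc,
          conjTranspose_mul, conjTranspose_conjTranspose]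
        rfl
    _ ≤ hilbertSchmidtNorm (V * Sᴴ) * hilbertSchmidtNorm M := re_trace_conjTranspose_mul_le _ _
    _ ≤ hilbertSchmidtNorm Sᴴ * hilbertSchmidtNorm M :=
      mul_le_mul_of_nonneg_right (hilbertSchmidtNorm_mul_le hV Sᴴ) (hilbertSchmidtNorm_nonneg _)
    _ = hilbertSchmidtNorm M * hilbertSchmidtNorm Sᴴ := mul_comm _ _

end TraceNorm

/-- For PSD matrices `A, B, C` with `Tr C = 1`,
`| ‖√A √C‖₁ - ‖√B √C‖₁ | ≤ √(Tr((√A - √B)²))`. -/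
theorem fidelity_diff_bound (d : ℕ) (A B C : Matrix (Fin d) (Fin d) ℂ)
    (hA : A.PosSemidef) (hB : B.PosSemidef) (hC : C.PosSemidef) (hCtr : C.trace = 1) :
    |traceNorm (hA.sqrt * hC.sqrt) - traceNorm (hB.sqrt * hC.sqrt)|
      ≤ Real.sqrt ((((hA.sqrt - hB.sqrt) ^ 2).trace).re) := by
  have hsqrtC : hilbertSchmidtNorm hC.sqrtᴴ = 1 := by
    rw [hilbertSchmidtNorm, conjTranspose_conjTranspose, hC.conjTranspose_sqrt, hC.sqrt_mul_self,
      hCtr, RCLike.one_re, Real.sqrt_one]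
  have hsqrtAB : hilbertSchmidtNorm (hA.sqrt - hB.sqrt)
      = Real.sqrt ((((hA.sqrt - hB.sqrt) ^ 2).trace).re) := by
    rw [hilbertSchmidtNorm, conjTranspose_sub, hA.conjTranspose_sqrt, hB.conjTranspose_sqrt, sq]
    rfl
  calc |traceNorm (hA.sqrt * hC.sqrt) - traceNorm (hB.sqrt * hC.sqrt)|
      ≤ traceNorm ((hA.sqrt - hB.sqrt) * hC.sqrt) := by
        rw [sub_mul]; exact abs_traceNorm_sub_traceNorm_le _ _
    _ ≤ hilbertSchmidtNorm (hA.sqrt - hB.sqrt) * hilbertSchmidtNorm hC.sqrtᴴ :=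
        traceNorm_mul_le _ _
    _ = Real.sqrt ((((hA.sqrt - hB.sqrt) ^ 2).trace).re) := by rw [hsqrtC, mul_one, hsqrtAB]
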